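/- A graph G has a nontrivial path cover (a partition of V(G) into vertex-disjoint paths each with at least one edge) if and only if for every subset S ⊆ V(G), the number of isolated vertices of G − S is at most 2|S|. -/

import Mathlib

open SimpleGraph

namespace MBD

variable {V : Type*}

/-- Dominator's claimed set `D` is a dominating set of `G`. -/
def Dominates (G : SimpleGraph V) (D : Finset V) : Prop :=
  ∀ v : V, ∃ d ∈ D, d = v ∨ G.Adj d v

/-- Staller's claimed set `S` contains the whole closed neighborhood of some vertex. -/
def StallerWinSet (G : SimpleGraph V) (S : Finset V) : Prop :=
  ∃ v : V, ∀ u : V, (u = v ∨ G.Adj u v) → u ∈ S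

variable [DecidableEq V]

mutual
  /-- `DomD G k D S`: with Dominator having claimed `D`, Staller `S`, and Dominator to
  move, Dominator has a strategy winning the Maker-Breaker domination game on `G`
  using at most `k` further moves of his own. -/
  inductive DomD (G : SimpleGraph V) : ℕ → Finset V → Finset V → Prop
    | win {k : ℕ} {D S : Finset V} : Dominates G D → DomD G k D S
    | move {k : ℕ} {D S : Finset V} (v : V) : v ∉ D → v ∉ S →
        DomS G k (insert v D) S → DomD G (k + 1) D S
  /-- Like `DomD`, but it is Staller's turn to move. -/
  inductive DomS (G : SimpleGraph V) : ℕ → Finset V → Finset V → Prop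
    | win {k : ℕ} {D S : Finset V} : Dominates G D → DomS G k D S
    | move {k : ℕ} {D S : Finset V} : (∃ v : V, v ∉ D ∧ v ∉ S) →
        (∀ v : V, v ∉ D → v ∉ S → DomD G k D (insert v S)) → DomS G k D S
end

mutual
  /-- `StallD G k D S`: with Dominator having claimed `D`, Staller `S`, and Dominator to
  move, Staller has a strategy winning (claiming a whole closed neighborhood) within at
  most `k` further moves of her own. -/
  inductive StallD (G : SimpleGraph V) : ℕ → Finset V → Finset V → Prop
    | win {k : ℕ} {D S : Finset V} : StallerWinSet G S → StallD G k D S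
    | move {k : ℕ} {D S : Finset V} : (∃ v : V, v ∉ D ∧ v ∉ S) →
        (∀ v : V, v ∉ D → v ∉ S → StallS G k (insert v D) S) → StallD G k D S
  /-- Like `StallD`, but it is Staller's turn to move. -/
  inductive StallS (G : SimpleGraph V) : ℕ → Finset V → Finset V → Prop
    | win {k : ℕ} {D S : Finset V} : StallerWinSet G S → StallS G k D S
    | move {k : ℕ} {D S : Finset V} (v : V) : v ∉ D → v ∉ S →
        StallD G k D (insert v S) → StallS G (k + 1) D S
end

/-- Dominator has a winning strategy in the D-game (Dominator starts). -/
def DominatorWinsD (G : SimpleGraph V) : Prop := ∃ k, DomD G k ∅ ∅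

/-- Dominator has a winning strategy in the S-game (Staller starts). -/
def DominatorWinsS (G : SimpleGraph V) : Prop := ∃ k, DomS G k ∅ ∅

/-- Staller has a winning strategy in the D-game (Dominator starts). -/
def StallerWinsD (G : SimpleGraph V) : Prop := ∃ k, StallD G k ∅ ∅

/-- Staller has a winning strategy in the S-game (Staller starts). -/
def StallerWinsS (G : SimpleGraph V) : Prop := ∃ k, StallS G k ∅ ∅

/-- Outcome `𝒟`: Dominator wins both the D-game and the S-game. -/
def outcomeD (G : SimpleGraph V) : Prop := DominatorWinsD G ∧ DominatorWinsS G

/-- Outcome `𝒮`: Staller wins both the D-game and the S-game. -/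
def outcomeS (G : SimpleGraph V) : Prop := StallerWinsD G ∧ StallerWinsS G

/-- Outcome `𝒩`: the first player wins in both games. -/
def outcomeN (G : SimpleGraph V) : Prop := DominatorWinsD G ∧ StallerWinsS G

/-- `γ_MB(G)`: the minimum number of Dominator's moves needed to win the D-game,
`∞` if he has no winning strategy. -/
noncomputable def gMB (G : SimpleGraph V) : ℕ∞ :=
  sInf ((fun k : ℕ => (k : ℕ∞)) '' {k | DomD G k ∅ ∅})

/-- `γ_MB'(G)`: the minimum number of Dominator's moves needed to win the S-game. -/
noncomputable def gMB' (G : SimpleGraph V) : ℕ∞ :=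
  sInf ((fun k : ℕ => (k : ℕ∞)) '' {k | DomS G k ∅ ∅})

/-- `γ_SMB(G)`: the minimum number of Staller's moves needed to win the D-game. -/
noncomputable def gSMB (G : SimpleGraph V) : ℕ∞ :=
  sInf ((fun k : ℕ => (k : ℕ∞)) '' {k | StallD G k ∅ ∅})

/-- `γ_SMB'(G)`: the minimum number of Staller's moves needed to win the S-game. -/
noncomputable def gSMB' (G : SimpleGraph V) : ℕ∞ :=
  sInf ((fun k : ℕ => (k : ℕ∞)) '' {k | StallS G k ∅ ∅})

end MBD

namespace MBD

/-- `P` is a nontrivial path cover of `G`: a partition of the vertex set of `G` into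
blocks, each of cardinality at least `2`, such that each block is the vertex set of a
path of `G`. -/
def IsNontrivialPathCover {V : Type*} [DecidableEq V] (G : SimpleGraph V)
    (P : Finset (Finset V)) : Prop :=
  (∀ v : V, ∃ B ∈ P, v ∈ B) ∧
  (∀ B ∈ P, ∀ C ∈ P, B ≠ C → Disjoint B C) ∧
  (∀ B ∈ P, 2 ≤ B.card ∧
    ∃ (u w : V) (p : G.Walk u w), p.IsPath ∧ p.support.toFinset = B)

end MBD

namespace PF
set_option linter.unusedSectionVars false

variable {V : Type*} [Fintype V] [DecidableEq V] (G : SimpleGraph V) [DecidableRel G.Adj]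

/-- the leaves of a center `c` under star-assignment `f` -/
def leaves (f : V → Option V) (c : V) : Finset V :=
  Finset.univ.filter fun v => v ≠ c ∧ f v = some c

/-- covered vertices -/
def cov (f : V → Option V) : Finset V :=
  Finset.univ.filter fun v => f v ≠ none

def Valid (f : V → Option V) : Prop :=
  (∀ v c, f v = some c → f c = some c ∧ (v = c ∨ G.Adj c v)) ∧
  (∀ c, f c = some c → 1 ≤ (leaves f c).card ∧ (leaves f c).card ≤ 2)

variable {G}

lemma mem_leaves {f : V → Option V} {c v : V} :
    v ∈ leaves f c ↔ v ≠ c ∧ f v = some c := by simp [leaves]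

lemma mem_cov {f : V → Option V} {v : V} : v ∈ cov f ↔ f v ≠ none := by simp [cov]

lemma leaves_eq_of_agree {f g : V → Option V} {c : V}
    (h : ∀ v, v ≠ c → ¬(f v = some c ∧ g v ≠ some c) ∧ ¬(g v = some c ∧ f v ≠ some c)) :
    leaves f c = leaves g c := by
  ext v
  simp only [mem_leaves]
  constructor
  · rintro ⟨hv, hfv⟩
    refine ⟨hv, ?_⟩
    by_contra hgv
    exact (h v hv).1 ⟨hfv, hgv⟩
  · rintro ⟨hv, hgv⟩
    refine ⟨hv, ?_⟩
    by_contra hfv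
    exact (h v hv).2 ⟨hgv, hfv⟩

/-- Surgery: move leaf `y` off center `z`, and attach fresh vertex `x` instead. -/
lemma swap_leaf {f : V → Option V} (hf : Valid G f) {y x z : V}
    (hz : f z = some z) (hy : f y = some z) (hyz : y ≠ z) (hx : f x = none)
    (hadj : G.Adj z x) :
    ∃ g : V → Option V, Valid G g ∧ (cov g).card = (cov f).card ∧
      (∀ c, g c = some c ↔ f c = some c) ∧
      (∀ c, f c = some c → (leaves g c).card = (leaves f c).card) ∧
      g y = none ∧
      leaves g z = insert x ((leaves f z).erase y) ∧
      (∀ c, c ≠ z → leaves g c = leaves f c) := by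
  have hxy : x ≠ y := fun h => by rw [h, hy] at hx; simp at hx
  have hxz : x ≠ z := fun h => by rw [h, hz] at hx; simp at hx
  set g : V → Option V := Function.update (Function.update f y none) x (some z) with hg
  have hgx : g x = some z := by simp [hg]
  have hgy : g y = none := by simp [hg, Function.update_of_ne hxy.symm, hxy]
  have hgo : ∀ v, v ≠ x → v ≠ y → g v = f v := by
    intro v hvx hvy
    simp [hg, Function.update_of_ne hvx, Function.update_of_ne hvy]
  have hgz : g z = some z := by rw [hgo z hxz.symm hyz.symm]; exact hz
  -- no vertex other than y points to y; nothing points to x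
  have hnoy : ∀ v, f v ≠ some y := by
    intro v hv
    have := (hf.1 v y hv).1
    rw [hy] at this
    exact hyz (Option.some_injective _ this).symm
  have hnox : ∀ v, f v ≠ some x := by
    intro v hv
    have := (hf.1 v x hv).1
    rw [hx] at this; simp at this
  have hleavesz : leaves g z = insert x ((leaves f z).erase y) := by
    ext v
    simp only [mem_leaves, Finset.mem_insert, Finset.mem_erase]
    by_cases hvx : v = x
    · subst hvx; simp [hgx, hxz]
    · by_cases hvy : v = y
      · subst hvy; simp [hgy, hvx, hyz]
      · rw [hgo v hvx hvy]
        constructor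
        · rintro ⟨h1, h2⟩; exact Or.inr ⟨hvy, h1, h2⟩
        · rintro (h | ⟨h1, h2, h3⟩)
          · exact absurd h hvx
          · exact ⟨h2, h3⟩
  have hleaveso : ∀ c, c ≠ z → leaves g c = leaves f c := by
    intro c hcz
    ext v
    simp only [mem_leaves]
    by_cases hvx : v = x
    · subst hvx
      rw [hgx]
      simp only [hx]
      constructor
      · rintro ⟨-, h⟩; exact absurd (Option.some_injective _ h).symm hcz
      · rintro ⟨-, h⟩; simp at h
    · by_cases hvy : v = y
      · subst hvy
        rw [hgy]
        simp only [hy]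
        constructor
        · rintro ⟨-, h⟩; simp at h
        · rintro ⟨-, h⟩; exact absurd (Option.some_injective _ h).symm hcz
      · rw [hgo v hvx hvy]
  have hcenters : ∀ c, (g c = some c ↔ f c = some c) := by
    intro c
    by_cases hcx : c = x
    · subst hcx
      rw [hgx]
      simp only [hx]
      constructor
      · intro h; exact absurd (Option.some_injective _ h).symm hxz
      · intro h; simp at h
    · by_cases hcy : c = y
      · subst hcy
        rw [hgy]
        simp only [hy]
        constructor
        · intro h; simp at h
        · intro h; exact absurd (Option.some_injective _ h).symm hyz
      · rw [hgo c hcx hcy]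
  have hyinz : y ∈ leaves f z := mem_leaves.2 ⟨hyz, hy⟩
  have hxninz : x ∉ (leaves f z).erase y := by
    simp [mem_leaves, hx]
  have hcardz : (leaves g z).card = (leaves f z).card := by
    rw [hleavesz, Finset.card_insert_of_notMem hxninz,
      Finset.card_erase_of_mem hyinz]
    have : 1 ≤ (leaves f z).card := Finset.card_pos.2 ⟨y, hyinz⟩
    omega
  have hcards : ∀ c, f c = some c → (leaves g c).card = (leaves f c).card := by
    intro c hc
    by_cases hcz : c = z
    · subst hcz; exact hcardz
    · rw [hleaveso c hcz]
  refine ⟨g, ⟨?_, ?_⟩, ?_, hcenters, hcards, hgy, hleavesz, hleaveso⟩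
  · -- validity (i)
    intro v c hv
    by_cases hvx : v = x
    · subst hvx
      rw [hgx] at hv
      obtain rfl : z = c := Option.some_injective _ hv
      exact ⟨hgz, Or.inr hadj⟩
    · by_cases hvy : v = y
      · subst hvy; rw [hgy] at hv; simp at hv
      · rw [hgo v hvx hvy] at hv
        obtain ⟨h1, h2⟩ := hf.1 v c hv
        have hcx : c ≠ x := fun h => by rw [h, hx] at h1; simp at h1
        have hcy : c ≠ y := by
          intro h; subst h
          rw [hy] at h1
          exact hyz (Option.some_injective _ h1).symm
        rw [hgo c hcx hcy]
        exact ⟨h1, h2⟩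
  · -- validity (ii)
    intro c hc
    have hfc : f c = some c := (hcenters c).1 hc
    rw [hcards c hfc]
    exact hf.2 c hfc
  · -- cov card
    have : cov g = insert x ((cov f).erase y) := by
      ext v
      simp only [mem_cov, Finset.mem_insert, Finset.mem_erase]
      by_cases hvx : v = x
      · subst hvx; simp [hgx]
      · by_cases hvy : v = y
        · subst hvy; simp [hgy, hvx]
        · rw [hgo v hvx hvy]; simp [hvx, hvy, mem_cov]
    rw [this, Finset.card_insert_of_notMem (by simp [mem_cov, hx]),
      Finset.card_erase_of_mem (mem_cov.2 (by simp [hy]))]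
    have : 1 ≤ (cov f).card := Finset.card_pos.2 ⟨y, mem_cov.2 (by simp [hy])⟩
    omega


lemma cov_lt {f g : V → Option V} {y : V}
    (hsub : ∀ v, f v ≠ none → g v ≠ none) (hy : f y = none) (hgy : g y ≠ none) :
    (cov f).card < (cov g).card := by
  apply Finset.card_lt_card
  constructor
  · intro v hv
    exact mem_cov.2 (hsub v (mem_cov.1 hv))
  · intro hc
    have := hc (mem_cov.2 hgy)
    rw [mem_cov] at this
    exact this hy

lemma augment {f : V → Option V} (hf : Valid G f)
    (hmax : ∀ g, Valid G g → (cov g).card ≤ (cov f).card)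
    {y z : V} (hy : f y = none) (hadj : G.Adj y z) :
    f z = some z ∧ (leaves f z).card = 2 := by
  have hyz : y ≠ z := hadj.ne
  have hznoty : ∀ w, f w ≠ some y := by
    intro w hw
    have := (hf.1 w y hw).1
    rw [hy] at this; simp at this
  rcases hfz : f z with _ | c
  · -- z uncovered : new star z-y
    exfalso
    have hnoz : ∀ w, f w ≠ some z := by
      intro w hw
      have := (hf.1 w z hw).1
      rw [hfz] at this; simp at this
    set g : V → Option V := fun w => if w = y ∨ w = z then some z else f w with hg
    have hgy : g y = some z := by simp [hg]
    have hgz : g z = some z := by simp [hg]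
    have hgo : ∀ v, v ≠ y → v ≠ z → g v = f v := by
      intro v h1 h2; simp [hg, h1, h2]
    have hlz : leaves g z = {y} := by
      ext v
      simp only [mem_leaves, Finset.mem_singleton]
      by_cases h1 : v = y
      · subst h1; simp [hgy, hyz]
      · by_cases h2 : v = z
        · constructor
          · rintro ⟨a, -⟩; exact absurd h2 a
          · intro h; exact absurd h h1
        · rw [hgo v h1 h2]
          simp [h1, h2, hnoz v]
    have hlo : ∀ c', c' ≠ z → leaves g c' = leaves f c' := by
      intro c' hc'
      have hzc' : ((some z : Option V) = some c') ↔ False := by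
        simp; exact fun h => hc' h.symm
      ext v
      simp only [mem_leaves]
      by_cases h1 : v = y
      · subst h1; rw [hgy, hy, hzc']; simp
      · by_cases h2 : v = z
        · subst h2; rw [hgz, hfz, hzc']; simp
        · rw [hgo v h1 h2]
    have hgvalid : Valid G g := by
      constructor
      · intro v c' hv
        by_cases h1 : v = y
        · subst h1
          rw [hgy] at hv; simp at hv; subst hv
          exact ⟨hgz, Or.inr hadj.symm⟩
        · by_cases h2 : v = z
          · subst h2
            rw [hgz] at hv; simp at hv; subst hv
            exact ⟨hgz, Or.inl rfl⟩
          · rw [hgo v h1 h2] at hv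
            obtain ⟨hc1, hc2⟩ := hf.1 v c' hv
            have hcy : c' ≠ y := fun h => hznoty c' (h ▸ hc1)
            have hcz : c' ≠ z := fun h => hnoz c' (h ▸ hc1)
            rw [hgo c' hcy hcz]
            exact ⟨hc1, hc2⟩
      · intro c' hc'
        by_cases h2 : c' = z
        · subst h2
          rw [hlz]; simp
        · have h1 : c' ≠ y := by
            intro h; subst h; rw [hgy] at hc'; simp at hc'
            exact hyz hc'.symm
          rw [hgo c' h1 h2] at hc'
          rw [hlo c' h2]
          exact hf.2 c' hc'
    have := hmax g hgvalid
    have hlt : (cov f).card < (cov g).card := by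
      apply cov_lt (y := y) _ hy (by rw [hgy]; simp)
      intro v hv
      by_cases h1 : v = y
      · rw [h1, hgy]; simp
      · by_cases h2 : v = z
        · rw [h2, hgz]; simp
        · rw [hgo v h1 h2]; exact hv
    omega
  · -- z covered, pointing to c
    obtain ⟨hcc, hczadj⟩ := hf.1 z c hfz
    by_cases hzc : z = c
    · -- z is a center
      subst hzc
      obtain ⟨h1, h2⟩ := hf.2 z hfz
      refine ⟨rfl, ?_⟩
      by_contra hne
      have hcard1 : (leaves f z).card = 1 := by omega
      -- attach y to z
      set g : V → Option V := Function.update f y (some z) with hg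
      have hgy : g y = some z := by simp [hg]
      have hgo : ∀ v, v ≠ y → g v = f v := by
        intro v hv1; simp [hg, Function.update_of_ne hv1]
      have hgz : g z = some z := by rw [hgo z hyz.symm]; exact hfz
      have hlz : leaves g z = insert y (leaves f z) := by
        ext v
        simp only [mem_leaves, Finset.mem_insert]
        by_cases hv1 : v = y
        · subst hv1; simp [hgy, hyz]
        · rw [hgo v hv1]
          constructor
          · rintro ⟨a, b⟩; exact Or.inr ⟨a, b⟩
          · rintro (h | ⟨a, b⟩)
            · exact absurd h hv1
            · exact ⟨a, b⟩
      have hlo : ∀ c', c' ≠ z → leaves g c' = leaves f c' := by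
        intro c' hc'
        have hzc' : ((some z : Option V) = some c') ↔ False := by
          simp; exact fun h => hc' h.symm
        ext v
        simp only [mem_leaves]
        by_cases hv1 : v = y
        · subst hv1; rw [hgy, hy, hzc']; simp
        · rw [hgo v hv1]
      have hgvalid : Valid G g := by
        constructor
        · intro v c' hv
          by_cases hv1 : v = y
          · subst hv1
            rw [hgy] at hv; simp at hv; subst hv
            exact ⟨hgz, Or.inr hadj.symm⟩
          · rw [hgo v hv1] at hv
            obtain ⟨hc1, hc2⟩ := hf.1 v c' hv
            have hcy : c' ≠ y := fun h => hznoty c' (h ▸ hc1)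
            rw [hgo c' hcy]
            exact ⟨hc1, hc2⟩
        · intro c' hc'
          by_cases h3 : c' = z
          · subst h3
            rw [hlz, Finset.card_insert_of_notMem (by simp [mem_leaves, hy]), hcard1]
            omega
          · have hv1 : c' ≠ y := by
              intro h; subst h; rw [hgy] at hc'; simp at hc'
              exact hyz hc'.symm
            rw [hgo c' hv1] at hc'
            rw [hlo c' h3]
            exact hf.2 c' hc'
      have := hmax g hgvalid
      have hlt : (cov f).card < (cov g).card := by
        apply cov_lt (y := y) _ hy (by rw [hgy]; simp)
        intro v hv
        by_cases hv1 : v = y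
        · rw [hv1, hgy]; simp
        · rw [hgo v hv1]; exact hv
      omega
    · -- z is a leaf of c
      exfalso
      have hnoz : ∀ w, f w ≠ some z := by
        intro w hw
        have := (hf.1 w z hw).1
        rw [hfz] at this; simp at this
        exact hzc this.symm
      have hzadj : G.Adj c z := hczadj.resolve_left hzc
      obtain ⟨hc1, hc2⟩ := hf.2 c hcc
      have hzmem : z ∈ leaves f c := mem_leaves.2 ⟨hzc, hfz⟩
      have hcz : c ≠ z := fun h => hzc h.symm
      have hcy : c ≠ y := fun h => by rw [h, hy] at hcc; simp at hcc
      by_cases hcard : (leaves f c).card = 1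
      · -- c has only leaf z : rebuild star centered z with leaves c, y
        have hlfc : leaves f c = {z} := by
          obtain ⟨x, hx⟩ := Finset.card_eq_one.1 hcard
          rw [hx] at hzmem ⊢
          simp at hzmem
          rw [hzmem]
        set g : V → Option V := fun w => if w = y ∨ w = z ∨ w = c then some z else f w with hg
        have hgy : g y = some z := by simp [hg]
        have hgz : g z = some z := by simp [hg]
        have hgc : g c = some z := by simp [hg]
        have hgo : ∀ v, v ≠ y → v ≠ z → v ≠ c → g v = f v := by
          intro v e1 e2 e3; simp [hg, e1, e2, e3]
        have hnoc : ∀ w, w ≠ z → w ≠ c → f w ≠ some c := by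
          intro w hwz hwc hw
          have : w ∈ leaves f c := mem_leaves.2 ⟨hwc, hw⟩
          rw [hlfc] at this
          simp at this
          exact hwz this
        have hlz : leaves g z = {y, c} := by
          ext v
          simp only [mem_leaves, Finset.mem_insert, Finset.mem_singleton]
          by_cases e1 : v = y
          · subst e1; simp [hgy, hyz]
          · by_cases e2 : v = z
            · constructor
              · rintro ⟨a, -⟩; exact absurd e2 a
              · rintro (h | h)
                · exact absurd h e1
                · exact (hzc (e2.symm.trans h)).elim
            · by_cases e3 : v = c
              · subst e3; simp [hgc, hcz, e1]
              · rw [hgo v e1 e2 e3]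
                simp [e1, e2, e3, hnoz v]
        have hlo : ∀ d, d ≠ z → d ≠ c → leaves g d = leaves f d := by
          intro d hd1 hd2
          have hzd : ((some z : Option V) = some d) ↔ False := by
            simp; exact fun h => hd1 h.symm
          ext v
          simp only [mem_leaves]
          by_cases e1 : v = y
          · subst e1; rw [hgy, hy, hzd]; simp
          · by_cases e2 : v = z
            · subst e2
              rw [hgz, hzd]
              constructor
              · rintro ⟨-, h⟩; exact h.elim
              · rintro ⟨-, h⟩; rw [hfz] at h
                exact absurd (Option.some_injective _ h).symm hd2
            · by_cases e3 : v = c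
              · subst e3
                rw [hgc, hzd]
                constructor
                · rintro ⟨-, h⟩; exact h.elim
                · rintro ⟨-, h⟩; rw [hcc] at h
                  exact absurd (Option.some_injective _ h).symm hd2
              · rw [hgo v e1 e2 e3]
        have hgvalid : Valid G g := by
          constructor
          · intro v d hv
            by_cases e1 : v = y
            · subst e1
              rw [hgy] at hv; simp at hv; subst hv
              exact ⟨hgz, Or.inr hadj.symm⟩
            · by_cases e2 : v = z
              · subst e2
                rw [hgz] at hv; simp at hv; subst hv
                exact ⟨hgz, Or.inl rfl⟩
              · by_cases e3 : v = c
                · subst e3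
                  rw [hgc] at hv; simp at hv; subst hv
                  exact ⟨hgz, Or.inr hzadj.symm⟩
                · rw [hgo v e1 e2 e3] at hv
                  obtain ⟨hd1, hd2⟩ := hf.1 v d hv
                  have f1 : d ≠ y := fun h => hznoty d (h ▸ hd1)
                  have f2 : d ≠ z := fun h => hnoz d (h ▸ hd1)
                  have f3 : d ≠ c := by
                    intro h; subst h
                    exact hnoc v e2 e3 hv
                  rw [hgo d f1 f2 f3]
                  exact ⟨hd1, hd2⟩
          · intro d hd
            by_cases e2 : d = z
            · subst e2
              rw [hlz, Finset.card_insert_of_notMem (by simp [hcy.symm]),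
                Finset.card_singleton]
              omega
            · have e1 : d ≠ y := by
                intro h; subst h; rw [hgy] at hd; simp at hd
                exact hyz hd.symm
              have e3 : d ≠ c := by
                intro h; subst h; rw [hgc] at hd; simp at hd
                exact hcz hd.symm
              rw [hgo d e1 e2 e3] at hd
              rw [hlo d e2 e3]
              exact hf.2 d hd
        have := hmax g hgvalid
        have hlt : (cov f).card < (cov g).card := by
          apply cov_lt (y := y) _ hy (by rw [hgy]; simp)
          intro v hv
          by_cases e1 : v = y
          · rw [e1, hgy]; simp
          · by_cases e2 : v = z
            · rw [e2, hgz]; simp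
            · by_cases e3 : v = c
              · rw [e3, hgc]; simp
              · rw [hgo v e1 e2 e3]; exact hv
        omega
      · -- c has two leaves : split off z as a center with leaf y
        have hcard2 : (leaves f c).card = 2 := by omega
        set g : V → Option V := fun w => if w = y ∨ w = z then some z else f w with hg
        have hgy : g y = some z := by simp [hg]
        have hgz : g z = some z := by simp [hg]
        have hgo : ∀ v, v ≠ y → v ≠ z → g v = f v := by
          intro v e1 e2; simp [hg, e1, e2]
        have hgc : g c = some c := by
          rw [hgo c hcy hcz]; exact hcc
        have hlz : leaves g z = {y} := by
          ext v
          simp only [mem_leaves, Finset.mem_singleton]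
          by_cases e1 : v = y
          · subst e1; simp [hgy, hyz]
          · by_cases e2 : v = z
            · constructor
              · rintro ⟨a, -⟩; exact absurd e2 a
              · intro h; exact absurd h e1
            · rw [hgo v e1 e2]
              simp [e1, e2, hnoz v]
        have hlc : leaves g c = (leaves f c).erase z := by
          ext v
          simp only [mem_leaves, Finset.mem_erase]
          have hzcF : ((some z : Option V) = some c) ↔ False := by
            simp; exact hzc
          by_cases e1 : v = y
          · subst e1
            rw [hgy, hy, hzcF]
            simp
          · by_cases e2 : v = z
            · subst e2
              rw [hgz, hzcF]
              constructor
              · rintro ⟨-, h⟩; exact h.elim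
              · rintro ⟨h, -⟩; exact absurd rfl h
            · rw [hgo v e1 e2]
              constructor
              · rintro ⟨a, b⟩; exact ⟨e2, a, b⟩
              · rintro ⟨-, a, b⟩; exact ⟨a, b⟩
        have hlo : ∀ d, d ≠ z → d ≠ c → leaves g d = leaves f d := by
          intro d hd1 hd2
          have hzd : ((some z : Option V) = some d) ↔ False := by
            simp; exact fun h => hd1 h.symm
          ext v
          simp only [mem_leaves]
          by_cases e1 : v = y
          · subst e1; rw [hgy, hy, hzd]; simp
          · by_cases e2 : v = z
            · subst e2
              rw [hgz, hzd]
              constructor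
              · rintro ⟨-, h⟩; exact h.elim
              · rintro ⟨-, h⟩; rw [hfz] at h
                exact absurd (Option.some_injective _ h).symm hd2
            · rw [hgo v e1 e2]
        have hgvalid : Valid G g := by
          constructor
          · intro v d hv
            by_cases e1 : v = y
            · subst e1
              rw [hgy] at hv; simp at hv; subst hv
              exact ⟨hgz, Or.inr hadj.symm⟩
            · by_cases e2 : v = z
              · subst e2
                rw [hgz] at hv; simp at hv; subst hv
                exact ⟨hgz, Or.inl rfl⟩
              · rw [hgo v e1 e2] at hv
                obtain ⟨hd1, hd2⟩ := hf.1 v d hv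
                have f1 : d ≠ y := fun h => hznoty d (h ▸ hd1)
                have f2 : d ≠ z := fun h => hnoz d (h ▸ hd1)
                rw [hgo d f1 f2]
                exact ⟨hd1, hd2⟩
          · intro d hd
            by_cases e2 : d = z
            · subst e2
              rw [hlz]; simp
            · have e1 : d ≠ y := by
                intro h; subst h; rw [hgy] at hd; simp at hd
                exact hyz hd.symm
              rw [hgo d e1 e2] at hd
              by_cases e3 : d = c
              · subst e3
                rw [hlc, Finset.card_erase_of_mem hzmem, hcard2]
                omega
              · rw [hlo d e2 e3]
                exact hf.2 d hd
        have := hmax g hgvalid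
        have hlt : (cov f).card < (cov g).card := by
          apply cov_lt (y := y) _ hy (by rw [hgy]; simp)
          intro v hv
          by_cases e1 : v = y
          · rw [e1, hgy]; simp
          · by_cases e2 : v = z
            · rw [e2, hgz]; simp
            · rw [hgo v e1 e2]; exact hv
        omega


variable (G) in
/-- vertices reachable from `u` by alternating chains, in at most `n` steps -/
def ReachN (f : V → Option V) (u : V) : ℕ → V → Prop
  | 0, z => G.Adj u z
  | (n+1), z => ReachN f u n z ∨ ∃ c y, ReachN f u n c ∧ y ∈ leaves f c ∧ G.Adj y z

variable (G) in
/-- a rearrangement of `f` preserving coverage and centers, moving leaves only to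
reachable positions -/
def GoodN (f : V → Option V) (u : V) (n : ℕ) (g : V → Option V) : Prop :=
  Valid G g ∧ (cov g).card = (cov f).card ∧
  (∀ c, g c = some c ↔ f c = some c) ∧
  (∀ c, f c = some c → (leaves g c).card = (leaves f c).card) ∧
  (∀ c, f c = some c → ∀ w ∈ leaves g c,
    w ∈ leaves f c ∨ w = u ∨ ∃ d, ReachN G f u n d ∧ w ∈ leaves f d)

lemma reachN_succ {f : V → Option V} {u : V} {n : ℕ} {z : V}
    (h : ReachN G f u n z) : ReachN G f u (n+1) z := Or.inl h

lemma goodN_succ {f : V → Option V} {u : V} {n : ℕ} {g : V → Option V}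
    (h : GoodN G f u n g) : GoodN G f u (n+1) g := by
  obtain ⟨h1, h2, h3, h4, h5⟩ := h
  refine ⟨h1, h2, h3, h4, fun c hc w hw => ?_⟩
  rcases h5 c hc w hw with h | h | ⟨d, hd, hwd⟩
  · exact Or.inl h
  · exact Or.inr (Or.inl h)
  · exact Or.inr (Or.inr ⟨d, reachN_succ hd, hwd⟩)

lemma reach_claim {f : V → Option V} (hf : Valid G f)
    (hmax : ∀ g, Valid G g → (cov g).card ≤ (cov f).card)
    {u : V} (hu : f u = none) :
    ∀ n z, ReachN G f u n z → f z = some z ∧ (leaves f z).card = 2 ∧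
      ∀ y ∈ leaves f z, ∃ g, GoodN G f u n g ∧ g y = none := by
  intro n
  induction n with
  | zero =>
    intro z hz
    obtain ⟨hzc, hzcard⟩ := augment hf hmax hu hz
    refine ⟨hzc, hzcard, fun y hy => ?_⟩
    obtain ⟨hyz, hfy⟩ := mem_leaves.1 hy
    obtain ⟨g, hgv, hgcard, hgcent, hgcnt, hgy, hglz, hglo⟩ :=
      swap_leaf hf hzc hfy hyz hu hz.symm
    refine ⟨g, ⟨hgv, hgcard, hgcent, hgcnt, ?_⟩, hgy⟩
    intro c hc w hw
    by_cases hcz : c = z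
    · subst hcz
      rw [hglz] at hw
      rcases Finset.mem_insert.1 hw with h | h
      · exact Or.inr (Or.inl h)
      · exact Or.inl (Finset.mem_of_mem_erase h)
    · rw [hglo c hcz] at hw
      exact Or.inl hw
  | succ n ih =>
    intro z hz
    rcases hz with hzn | ⟨c, y, hc, hyl, hyz⟩
    · obtain ⟨a, b, hfree⟩ := ih z hzn
      refine ⟨a, b, fun y hy => ?_⟩
      obtain ⟨g, hg, hgy⟩ := hfree y hy
      exact ⟨g, goodN_succ hg, hgy⟩
    · obtain ⟨hfc, hcardc, hfree⟩ := ih c hc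
      obtain ⟨g, hg, hgy⟩ := hfree y hyl
      obtain ⟨hgv, hgcard, hgcent, hgcnt, hgsub⟩ := hg
      have hmax' : ∀ h, Valid G h → (cov h).card ≤ (cov g).card := by
        intro h hh; rw [hgcard]; exact hmax h hh
      obtain ⟨hgz, hgzcard⟩ := augment hgv hmax' hgy hyz
      have hfz : f z = some z := (hgcent z).1 hgz
      have hfzcard : (leaves f z).card = 2 := by
        rw [← hgcnt z hfz]; exact hgzcard
      refine ⟨hfz, hfzcard, fun y' hy' => ?_⟩
      obtain ⟨hy'z, hfy'⟩ := mem_leaves.1 hy'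
      by_cases hgy' : g y' = none
      · exact ⟨g, goodN_succ ⟨hgv, hgcard, hgcent, hgcnt, hgsub⟩, hgy'⟩
      · obtain ⟨c'', hy'c⟩ := Option.ne_none_iff_exists'.1 hgy'
        have hy'notcent : y' ≠ c'' := by
          intro h; subst h
          have := (hgcent y').1 hy'c
          rw [hfy'] at this; simp at this
          exact hy'z this.symm
        have hc''cent : g c'' = some c'' := (hgv.1 y' c'' hy'c).1
        have hy'leaf : y' ∈ leaves g c'' := mem_leaves.2 ⟨hy'notcent, hy'c⟩
        by_cases hc''z : c'' = z
        · subst hc''z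
          -- swap y' out of z's star in g, put y back in
          obtain ⟨g', hg'v, hg'card, hg'cent, hg'cnt, hg'y', hg'lz, hg'lo⟩ :=
            swap_leaf hgv hgz hy'c hy'notcent hgy hyz.symm
          refine ⟨g', ⟨hg'v, ?_, ?_, ?_, ?_⟩, hg'y'⟩
          · rw [hg'card, hgcard]
          · intro d; rw [hg'cent d, hgcent d]
          · intro d hd
            rw [hg'cnt d ((hgcent d).2 hd), hgcnt d hd]
          · intro d hd w hw
            by_cases hdz : d = c''
            · subst hdz
              rw [hg'lz] at hw
              rcases Finset.mem_insert.1 hw with h | h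
              · subst h
                exact Or.inr (Or.inr ⟨c, reachN_succ hc, hyl⟩)
              · rcases hgsub d hd w (Finset.mem_of_mem_erase h) with h' | h' | ⟨d', hd', hwd'⟩
                · exact Or.inl h'
                · exact Or.inr (Or.inl h')
                · exact Or.inr (Or.inr ⟨d', reachN_succ hd', hwd'⟩)
            · rw [hg'lo d hdz] at hw
              rcases hgsub d hd w hw with h' | h' | ⟨d', hd', hwd'⟩
              · exact Or.inl h'
              · exact Or.inr (Or.inl h')
              · exact Or.inr (Or.inr ⟨d', reachN_succ hd', hwd'⟩)
        · -- y' was already moved : it is an original leaf of some reachable center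
          have hfc'' : f c'' = some c'' := (hgcent c'').1 hc''cent
          rcases hgsub c'' hfc'' y' hy'leaf with h' | h' | ⟨d', hd', hwd'⟩
          · exfalso
            obtain ⟨-, h''⟩ := mem_leaves.1 h'
            rw [hfy'] at h''
            exact hc''z (Option.some_injective _ h'').symm
          · exfalso
            subst h'
            rw [hu] at hfy'; simp at hfy'
          · obtain ⟨-, h''⟩ := mem_leaves.1 hwd'
            rw [hfy'] at h''
            obtain rfl : z = d' := Option.some_injective _ h''
            obtain ⟨-, -, hfree'⟩ := ih z hd'
            obtain ⟨g'', hg'', hg''y'⟩ := hfree' y' hy'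
            exact ⟨g'', goodN_succ hg'', hg''y'⟩

/-- main covering lemma : under the isolation condition, a maximum valid
assignment covers everything -/
lemma exists_cover
    (H : ∀ S : Finset V,
      (Finset.univ.filter (fun v => v ∉ S ∧ ∀ w, G.Adj v w → w ∈ S)).card ≤ 2 * S.card) :
    ∃ f : V → Option V, Valid G f ∧ ∀ v, f v ≠ none := by
  classical
  have hne : Nonempty {f : V → Option V // Valid G f} :=
    ⟨⟨fun _ => none, ⟨fun v c h => by simp at h, fun c h => by simp at h⟩⟩⟩
  obtain ⟨⟨f, hf⟩, hmaxs⟩ := Finite.exists_max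
    (fun g : {f : V → Option V // Valid G f} => (cov g.1).card)
  have hmax : ∀ g, Valid G g → (cov g).card ≤ (cov f).card := fun g hg => hmaxs ⟨g, hg⟩
  refine ⟨f, hf, fun u hu => ?_⟩
  set SR : Finset V := Finset.univ.filter (fun z => ∃ n, ReachN G f u n z) with hSR
  have hmemSR : ∀ z, z ∈ SR ↔ ∃ n, ReachN G f u n z := by
    intro z; simp [hSR]
  set I : Finset V := insert u (SR.biUnion fun c => leaves f c) with hI
  have hkey := reach_claim hf hmax hu
  have hIsub : I ⊆ Finset.univ.filter (fun v => v ∉ SR ∧ ∀ w, G.Adj v w → w ∈ SR) := by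
    intro w hw
    rw [Finset.mem_filter]
    refine ⟨Finset.mem_univ _, ?_, ?_⟩
    · -- w ∉ SR
      intro hwSR
      obtain ⟨n, hn⟩ := (hmemSR w).1 hwSR
      have hwc := (hkey n w hn).1
      rcases Finset.mem_insert.1 hw with rfl | hw'
      · rw [hu] at hwc; simp at hwc
      · obtain ⟨c, hc, hwl⟩ := Finset.mem_biUnion.1 hw'
        obtain ⟨hwc', hfw⟩ := mem_leaves.1 hwl
        rw [hwc] at hfw
        exact hwc' (Option.some_injective _ hfw)
    · -- all neighbours of w are in SR
      intro w' hadj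
      rcases Finset.mem_insert.1 hw with rfl | hw'
      · exact (hmemSR w').2 ⟨0, hadj⟩
      · obtain ⟨c, hc, hwl⟩ := Finset.mem_biUnion.1 hw'
        obtain ⟨n, hn⟩ := (hmemSR c).1 hc
        exact (hmemSR w').2 ⟨n + 1, Or.inr ⟨c, w, hn, hwl, hadj⟩⟩
  have hucard : u ∉ SR.biUnion fun c => leaves f c := by
    intro h
    obtain ⟨c, -, hl⟩ := Finset.mem_biUnion.1 h
    obtain ⟨-, hfu⟩ := mem_leaves.1 hl
    rw [hu] at hfu; simp at hfu
  have hIcard : I.card = 1 + 2 * SR.card := by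
    rw [hI, Finset.card_insert_of_notMem hucard, Finset.card_biUnion]
    · have : ∀ c ∈ SR, (leaves f c).card = 2 := by
        intro c hc
        obtain ⟨n, hn⟩ := (hmemSR c).1 hc
        exact (hkey n c hn).2.1
      rw [Finset.sum_congr rfl this, Finset.sum_const, smul_eq_mul]
      omega
    · intro x hx y hy hxy
      rw [Function.onFun, Finset.disjoint_left]
      intro a ha ha'
      obtain ⟨-, h1⟩ := mem_leaves.1 ha
      obtain ⟨-, h2⟩ := mem_leaves.1 ha'
      rw [h1] at h2
      exact hxy (Option.some_injective _ h2)
  have := Finset.card_le_card hIsub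
  have := H SR
  omega


/-- a covering valid star assignment yields a nontrivial path cover -/
lemma cover_to_paths {f : V → Option V} (hf : Valid G f) (hcov : ∀ v, f v ≠ none) :
    ∃ P : Finset (Finset V),
      (∀ v : V, ∃ B ∈ P, v ∈ B) ∧
      (∀ B ∈ P, ∀ C ∈ P, B ≠ C → Disjoint B C) ∧
      (∀ B ∈ P, 2 ≤ B.card ∧
        ∃ (u w : V) (p : G.Walk u w), p.IsPath ∧ p.support.toFinset = B) := by
  classical
  set P := (Finset.univ.filter fun c => f c = some c).image
    (fun c => insert c (leaves f c)) with hP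
  have hblock : ∀ c, f c = some c → ∀ v, (v ∈ insert c (leaves f c) ↔ f v = some c) := by
    intro c hc v
    rw [Finset.mem_insert, mem_leaves]
    constructor
    · rintro (rfl | ⟨-, h⟩)
      · exact hc
      · exact h
    · intro h
      by_cases hvc : v = c
      · exact Or.inl hvc
      · exact Or.inr ⟨hvc, h⟩
  refine ⟨P, ?_, ?_, ?_⟩
  · intro v
    rcases hv : f v with _ | c
    · exact absurd hv (hcov v)
    · have hc : f c = some c := (hf.1 v c hv).1
      exact ⟨insert c (leaves f c), Finset.mem_image.2 ⟨c, by simp [hc], rfl⟩,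
        (hblock c hc v).2 hv⟩
  · intro B hB C hC hBC
    obtain ⟨b, hb, rfl⟩ := Finset.mem_image.1 hB
    obtain ⟨c, hc, rfl⟩ := Finset.mem_image.1 hC
    rw [Finset.mem_filter] at hb hc
    rw [Finset.disjoint_left]
    intro a haB haC
    have h1 := (hblock b hb.2 a).1 haB
    have h2 := (hblock c hc.2 a).1 haC
    rw [h1] at h2
    exact hBC (by rw [Option.some_injective _ h2])
  · intro B hB
    obtain ⟨c, hcmem, rfl⟩ := Finset.mem_image.1 hB
    rw [Finset.mem_filter] at hcmem
    have hc : f c = some c := hcmem.2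
    have hcnl : c ∉ leaves f c := by simp [mem_leaves]
    obtain ⟨h1, h2⟩ := hf.2 c hc
    have hcard : (insert c (leaves f c)).card = (leaves f c).card + 1 :=
      Finset.card_insert_of_notMem hcnl
    refine ⟨by omega, ?_⟩
    have hadj : ∀ x ∈ leaves f c, G.Adj c x := by
      intro x hx
      obtain ⟨hxc, hfx⟩ := mem_leaves.1 hx
      exact ((hf.1 x c hfx).2).resolve_left hxc
    have : (leaves f c).card = 1 ∨ (leaves f c).card = 2 := by omega
    rcases this with h | h
    · obtain ⟨x, hx⟩ := Finset.card_eq_one.1 h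
      have hxl : x ∈ leaves f c := by rw [hx]; simp
      have hcx : G.Adj c x := hadj x hxl
      refine ⟨c, x, SimpleGraph.Walk.cons hcx SimpleGraph.Walk.nil, ?_, ?_⟩
      · simp [SimpleGraph.Walk.isPath_def, hcx.ne]
      · rw [hx]
        ext a
        simp [SimpleGraph.Walk.support_cons, or_comm]
    · obtain ⟨x, y, hxy, hset⟩ := Finset.card_eq_two.1 h
      have hxl : x ∈ leaves f c := by rw [hset]; simp
      have hyl : y ∈ leaves f c := by rw [hset]; simp
      have hcx : G.Adj c x := hadj x hxl
      have hcy : G.Adj c y := hadj y hyl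
      refine ⟨x, y, SimpleGraph.Walk.cons hcx.symm
        (SimpleGraph.Walk.cons hcy SimpleGraph.Walk.nil), ?_, ?_⟩
      · simp [SimpleGraph.Walk.isPath_def, hcx.ne', hcy.ne, hxy]
      · rw [hset]
        ext a
        simp only [SimpleGraph.Walk.support_cons, SimpleGraph.Walk.support_nil,
          List.toFinset_cons, List.toFinset_nil, LawfulSingleton.insert_empty_eq, Finset.mem_insert,
          Finset.mem_singleton]
        tauto

/-- forward direction : a nontrivial path cover bounds the number of isolated
vertices after deleting any `S` -/
lemma paths_to_bound {P : Finset (Finset V)}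
    (hcov : ∀ v : V, ∃ B ∈ P, v ∈ B)
    (hdisj : ∀ B ∈ P, ∀ C ∈ P, B ≠ C → Disjoint B C)
    (hblocks : ∀ B ∈ P, 2 ≤ B.card ∧
      ∃ (u w : V) (p : G.Walk u w), p.IsPath ∧ p.support.toFinset = B)
    (S : Finset V) :
    (Finset.univ.filter (fun v => v ∉ S ∧ ∀ u, G.Adj v u → u ∈ S)).card ≤ 2 * S.card := by
  classical
  have huniq : ∀ B ∈ P, ∀ C ∈ P, ∀ v : V, v ∈ B → v ∈ C → B = C := by
    intro B hB C hC v hvB hvC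
    by_contra h
    exact (Finset.disjoint_left.1 (hdisj B hB C hC h)) hvB hvC
  choose Bf hBfP hBfmem using hcov
  have hLex : ∀ B ∈ P, ∃ l : List V, l.Chain' G.Adj ∧ l.Nodup ∧ l.toFinset = B ∧
      2 ≤ l.length := by
    intro B hB
    obtain ⟨hc2, x, y, p, hp, hsup⟩ := hblocks B hB
    refine ⟨p.support, p.isChain_adj_support, hp.support_nodup, hsup, ?_⟩
    have := List.toFinset_card_of_nodup hp.support_nodup
    rw [hsup] at this
    omega
  set L : Finset V → List V := fun B => if h : B ∈ P then (hLex B h).choose else [] with hLdef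
  have hLspec : ∀ B ∈ P, (L B).Chain' G.Adj ∧ (L B).Nodup ∧ (L B).toFinset = B ∧
      2 ≤ (L B).length := by
    intro B hB
    simp only [hLdef, dif_pos hB]
    exact (hLex B hB).choose_spec
  set m : V → V := fun v =>
    if (L (Bf v)).idxOf v + 1 < (L (Bf v)).length then
      (L (Bf v)).getD ((L (Bf v)).idxOf v + 1) v
    else
      (L (Bf v)).getD ((L (Bf v)).idxOf v - 1) v with hmdef
  -- basic facts about m
  have hmain : ∀ v : V, G.Adj v (m v) ∧ m v ∈ Bf v ∧
      (∀ s : V, m v = s →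
        v = (L (Bf v)).getD ((L (Bf v)).idxOf s - 1) s ∨
        v = (L (Bf v)).getD ((L (Bf v)).length - 1) s) := by
    intro v
    obtain ⟨hchain, hnodup, hfin, hlen⟩ := hLspec (Bf v) (hBfP v)
    have hvl : v ∈ L (Bf v) := by rw [← List.mem_toFinset, hfin]; exact hBfmem v
    have hilt : (L (Bf v)).idxOf v < (L (Bf v)).length := List.idxOf_lt_length_iff.2 hvl
    have hvi : (L (Bf v))[(L (Bf v)).idxOf v] = v := List.getElem_idxOf hilt
    have hgetmem : ∀ (n : ℕ), n < (L (Bf v)).length → ∀ (d : V),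
        (L (Bf v)).getD n d ∈ Bf v := by
      intro n hn d
      rw [List.getD_eq_getElem _ d hn]
      have h3 : (L (Bf v))[n] ∈ (L (Bf v)).toFinset :=
        List.mem_toFinset.2 (List.getElem_mem hn)
      rw [hfin] at h3
      exact h3
    have hchain' := List.isChain_iff_getElem.1 hchain
    by_cases hcase : (L (Bf v)).idxOf v + 1 < (L (Bf v)).length
    · have hm : m v = (L (Bf v))[(L (Bf v)).idxOf v + 1] := by
        rw [hmdef]
        simp only [if_pos hcase]
        exact List.getD_eq_getElem _ v hcase
      have hadj : G.Adj v (m v) := by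
        have h2 := hchain' ((L (Bf v)).idxOf v) (by omega)
        rw [hvi] at h2
        rw [hm]; exact h2
      refine ⟨hadj, by
        rw [hm, ← List.getD_eq_getElem _ v hcase]; exact hgetmem _ hcase v, ?_⟩
      intro s hs
      left
      rw [hm] at hs
      have hsl : s ∈ L (Bf v) := by rw [← hs]; exact List.getElem_mem hcase
      have hjlt : (L (Bf v)).idxOf s < (L (Bf v)).length := List.idxOf_lt_length_iff.2 hsl
      have hsj : (L (Bf v))[(L (Bf v)).idxOf s] = s := List.getElem_idxOf hjlt
      have hij : (L (Bf v)).idxOf v + 1 = (L (Bf v)).idxOf s := by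
        rw [← hsj] at hs
        exact (List.Nodup.getElem_inj_iff hnodup).1 hs
      have hidx : (L (Bf v)).idxOf s - 1 = (L (Bf v)).idxOf v := by omega
      rw [hidx, List.getD_eq_getElem _ s hilt, hvi]
    · have hieq : (L (Bf v)).length - 1 = (L (Bf v)).idxOf v := by omega
      have hprev : (L (Bf v)).idxOf v - 1 < (L (Bf v)).length := by omega
      have hm : m v = (L (Bf v))[(L (Bf v)).idxOf v - 1] := by
        rw [hmdef]
        simp only [if_neg hcase]
        exact List.getD_eq_getElem _ v hprev
      have hadj : G.Adj v (m v) := by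
        have h1 : (L (Bf v)).idxOf v - 1 + 1 = (L (Bf v)).idxOf v := by omega
        have h2 := hchain' ((L (Bf v)).idxOf v - 1) (by omega)
        simp only [List.get_eq_getElem, h1] at h2
        rw [hvi] at h2
        rw [hm]
        exact h2.symm
      refine ⟨hadj, by
        rw [hm, ← List.getD_eq_getElem _ v hprev]; exact hgetmem _ hprev v, ?_⟩
      intro s hs
      right
      rw [hieq, List.getD_eq_getElem _ s hilt, hvi]
  -- now count fibers
  apply Finset.card_le_mul_card_image_of_maps_to (f := m)
  · intro v hv
    rw [Finset.mem_filter] at hv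
    exact hv.2.2 (m v) (hmain v).1
  · intro s hsS
    have hsB : s ∈ Bf s := hBfmem s
    apply le_trans (Finset.card_le_card (?_ :
      _ ⊆ ({(L (Bf s)).getD ((L (Bf s)).idxOf s - 1) s,
            (L (Bf s)).getD ((L (Bf s)).length - 1) s} : Finset V)))
    · apply le_trans (Finset.card_insert_le _ _)
      simp
    · intro v hv
      rw [Finset.mem_filter] at hv
      obtain ⟨-, hms⟩ := hv
      obtain ⟨hadj, hmmem, hdet⟩ := hmain v
      have hBeq : Bf v = Bf s := by
        apply huniq _ (hBfP v) _ (hBfP s) s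
        · rw [← hms]; exact hmmem
        · exact hsB
      rcases hdet s hms with h | h <;>
        · rw [hBeq] at h
          simp [h]

end PF

/-- A graph `G` has a nontrivial path cover iff for every `S ⊆ V(G)`, the number of
isolated vertices of `G − S` is at most `2|S|`. -/
theorem stmt_10 {V : Type*} [Fintype V] [DecidableEq V] (G : SimpleGraph V)
    [DecidableRel G.Adj] :
    (∃ P : Finset (Finset V), MBD.IsNontrivialPathCover G P) ↔
      ∀ S : Finset V,
        (Finset.univ.filter (fun v => v ∉ S ∧ ∀ u, G.Adj v u → u ∈ S)).card
          ≤ 2 * S.card := by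
  constructor
  · rintro ⟨P, hcov, hdisj, hblocks⟩ S
    exact PF.paths_to_bound hcov hdisj hblocks S
  · intro H
    obtain ⟨f, hf, hc⟩ := PF.exists_cover H
    obtain ⟨P, h1, h2, h3⟩ := PF.cover_to_paths hf hc
    exact ⟨P, h1, h2, h3⟩
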